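/- arXiv:1509.06245 — 3 statements merged into one kernel-verified Lean document; each statement's English description precedes it below -/
import Mathlib

section
/- Let m ≥ 1, let μ0 and μT be Borel probability measures on ℝ^m, and let q : ℝ^m × ℝ^m → ℝ be continuous, bounded, and strictly positive. If (ν0, νT) and (ν0′, νT′) are two pairs of σ-finite Borel measures on ℝ^m such that both the measure μ with density q with respect to ν0 ⊗ νT and the measure μ′ with density q with respect to ν0′ ⊗ νT′ have first marginal μ0 and second marginal μT, then μ = μ′ as measures on ℝ^m × ℝ^m. -/
/-!
Positivity of `q` makes the reference measures `ν0'`, `νT'` absolutely continuous with respect to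
`ν0`, `νT` (both are equivalent to the common marginals), so `μ' = H • μ` with a product density
`H (x, y) = a x * b y`, which is `μ`-a.e. of the form `exp (u x + v y)`. Equal marginals give
`∫ (φ x + ψ y) (H - 1) dμ = 0` for bounded `φ`, `ψ`. Testing with the truncations of `u` and `v`
at level `n` yields a nonnegative integrand with vanishing integral; letting `n → ∞` pointwise,
`(u + v) (exp (u + v) - 1) = 0`, hence `H = 1` `μ`-a.e.
-/

open MeasureTheory Real
open scoped ENNReal

def symmClamp (n x : ℝ) : ℝ := max (-n) (min n x)

section symmClamp

variable {n : ℝ}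

lemma monotone_symmClamp (n : ℝ) : Monotone (symmClamp n) :=
  fun _ _ h => max_le_max le_rfl (min_le_min le_rfl h)

lemma continuous_symmClamp (n : ℝ) : Continuous (symmClamp n) :=
  continuous_const.max (continuous_const.min continuous_id)

lemma symmClamp_neg (hn : 0 ≤ n) (x : ℝ) : symmClamp n (-x) = -symmClamp n x := by
  simp only [symmClamp, max_def, min_def]
  split_ifs <;> linarith

lemma abs_symmClamp_le (hn : 0 ≤ n) (x : ℝ) : |symmClamp n x| ≤ n :=
  abs_le.2 ⟨le_max_left _ _, max_le (by linarith) (min_le_left _ _)⟩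

lemma symmClamp_of_abs_le {x : ℝ} (h : |x| ≤ n) : symmClamp n x = x := by
  rw [symmClamp, min_eq_right (abs_le.1 h).2, max_eq_right (abs_le.1 h).1]

end symmClamp

/-- `symmClamp n` is monotone and odd, so `symmClamp n u + symmClamp n v` has the sign of
`u + v`, as does `exp (u + v) - 1`. -/
lemma symmClamp_add_mul_exp_sub_one_nonneg {n : ℝ} (hn : 0 ≤ n) (u v : ℝ) :
    0 ≤ (symmClamp n u + symmClamp n v) * (exp (u + v) - 1) := by
  rcases le_total 0 (u + v) with h | h
  · have : -symmClamp n v ≤ symmClamp n u := by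
      rw [← symmClamp_neg hn]; exact monotone_symmClamp n (by linarith)
    exact mul_nonneg (by linarith) (by linarith [add_one_le_exp (u + v)])
  · have : symmClamp n u ≤ -symmClamp n v := by
      rw [← symmClamp_neg hn]; exact monotone_symmClamp n (by linarith)
    exact mul_nonneg_of_nonpos_of_nonpos (by linarith) (by linarith [exp_le_one_iff.2 h])

variable {Ω : Type*} [MeasurableSpace Ω]

lemma ae_add_eq_zero_of_integral_symmClamp_mul_eq_zero {μ : Measure Ω} [IsFiniteMeasure μ]
    {u v : Ω → ℝ} (hu : Measurable u) (hv : Measurable v)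
    (hexp : Integrable (fun ω => exp (u ω + v ω)) μ)
    (hu0 : ∀ n : ℕ, ∫ ω, symmClamp n (u ω) * (exp (u ω + v ω) - 1) ∂μ = 0)
    (hv0 : ∀ n : ℕ, ∫ ω, symmClamp n (v ω) * (exp (u ω + v ω) - 1) ∂μ = 0) :
    ∀ᵐ ω ∂μ, u ω + v ω = 0 := by
  have hint (n : ℕ) {w : Ω → ℝ} (hw : Measurable w) :
      Integrable (fun ω => symmClamp n (w ω) * (exp (u ω + v ω) - 1)) μ :=
    (hexp.sub (integrable_const 1)).bdd_mul
      ((continuous_symmClamp n).measurable.comp hw).aestronglyMeasurable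
      (ae_of_all _ fun ω => abs_symmClamp_le n.cast_nonneg (w ω))
  have hvanish (n : ℕ) : ∀ᵐ ω ∂μ,
      (symmClamp n (u ω) + symmClamp n (v ω)) * (exp (u ω + v ω) - 1) = 0 := by
    refine (integral_eq_zero_iff_of_nonneg
      (fun ω => symmClamp_add_mul_exp_sub_one_nonneg n.cast_nonneg (u ω) (v ω)) ?_).1 ?_
    · simp only [add_mul]; exact (hint n hu).add (hint n hv)
    · simp only [add_mul]
      rw [integral_add (hint n hu) (hint n hv), hu0, hv0, add_zero]
  filter_upwards [ae_all_iff.2 hvanish] with ω hω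
  obtain ⟨n, hn⟩ := exists_nat_ge (max |u ω| |v ω|)
  have h := hω n
  rw [symmClamp_of_abs_le ((le_max_left _ _).trans hn),
    symmClamp_of_abs_le ((le_max_right _ _).trans hn)] at h
  rcases mul_eq_zero.1 h with h | h
  · exact h
  · exact exp_eq_one_iff _ |>.1 (sub_eq_zero.1 h)

lemma integral_comp_mul_sub_one_eq_zero_of_map_withDensity_eq {γ : Type*} [MeasurableSpace γ]
    {μ : Measure Ω} [IsFiniteMeasure μ] {r : Ω → ℝ} (hrm : Measurable r) (hr : Integrable r μ)
    (hr0 : ∀ ω, 0 ≤ r ω) {X : Ω → γ} (hX : Measurable X)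
    (hmap : (μ.withDensity fun ω => ENNReal.ofReal (r ω)).map X = μ.map X)
    {f : γ → ℝ} (hf : Measurable f) {C : ℝ} (hfC : ∀ x, |f x| ≤ C) :
    ∫ ω, f (X ω) * (r ω - 1) ∂μ = 0 := by
  have hfX : AEStronglyMeasurable (fun ω => f (X ω)) μ := (hf.comp hX).aestronglyMeasurable
  have hbound : ∀ᵐ ω ∂μ, ‖f (X ω)‖ ≤ C := ae_of_all _ fun ω => hfC (X ω)
  have hweighted : ∫ ω, f (X ω) * r ω ∂μ = ∫ ω, f (X ω) ∂μ := calc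
    ∫ ω, f (X ω) * r ω ∂μ = ∫ ω, f (X ω) ∂(μ.withDensity fun ω => ENNReal.ofReal (r ω)) := by
      rw [integral_withDensity_eq_integral_toReal_smul hrm.ennreal_ofReal
        (ae_of_all _ fun _ => ENNReal.ofReal_lt_top)]
      simp only [ENNReal.toReal_ofReal (hr0 _), smul_eq_mul, mul_comm]
    _ = ∫ x, f x ∂((μ.withDensity fun ω => ENNReal.ofReal (r ω)).map X) :=
      (integral_map hX.aemeasurable hf.aestronglyMeasurable).symm
    _ = ∫ ω, f (X ω) ∂μ := by rw [hmap, integral_map hX.aemeasurable hf.aestronglyMeasurable]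
  simp only [mul_sub, mul_one]
  rw [integral_sub (hr.bdd_mul hfX hbound) (Integrable.of_bound hfX C hbound), hweighted, sub_self]

variable {α β : Type*} [MeasurableSpace α] [MeasurableSpace β]

theorem withDensity_exp_add_eq_self_of_map_eq {μ : Measure (α × β)} [IsFiniteMeasure μ]
    {u : α → ℝ} {v : β → ℝ} (hu : Measurable u) (hv : Measurable v)
    (hfst : (μ.withDensity fun p => ENNReal.ofReal (exp (u p.1 + v p.2))).map Prod.fst
      = μ.map Prod.fst)
    (hsnd : (μ.withDensity fun p => ENNReal.ofReal (exp (u p.1 + v p.2))).map Prod.snd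
      = μ.map Prod.snd) :
    μ.withDensity (fun p => ENNReal.ofReal (exp (u p.1 + v p.2))) = μ := by
  have hrm : Measurable fun p : α × β => exp (u p.1 + v p.2) := by fun_prop
  have hr : Integrable (fun p : α × β => exp (u p.1 + v p.2)) μ := by
    refine ⟨hrm.aestronglyMeasurable, (hasFiniteIntegral_iff_ofReal
      (ae_of_all _ fun p => (exp_pos _).le)).2 ?_⟩
    have hmass := congrArg (fun κ : Measure α => κ Set.univ) hfst
    simp only [Measure.map_apply measurable_fst MeasurableSet.univ, Set.preimage_univ,
      withDensity_apply _ MeasurableSet.univ, Measure.restrict_univ] at hmass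
    rw [hmass]
    exact measure_lt_top μ _
  have hzero : ∀ᵐ p ∂μ, u p.1 + v p.2 = 0 := by
    refine ae_add_eq_zero_of_integral_symmClamp_mul_eq_zero (hu.comp measurable_fst)
      (hv.comp measurable_snd) hr (fun n => ?_) (fun n => ?_)
    · exact integral_comp_mul_sub_one_eq_zero_of_map_withDensity_eq hrm hr
        (fun _ => (exp_pos _).le) measurable_fst hfst
        ((continuous_symmClamp n).measurable.comp hu) (fun x => abs_symmClamp_le n.cast_nonneg _)
    · exact integral_comp_mul_sub_one_eq_zero_of_map_withDensity_eq hrm hr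
        (fun _ => (exp_pos _).le) measurable_snd hsnd
        ((continuous_symmClamp n).measurable.comp hv) (fun x => abs_symmClamp_le n.cast_nonneg _)
  rw [withDensity_congr_ae (g := 1) (hzero.mono fun p hp => by simp [hp]), withDensity_one]

section Marginals

variable {ρ : Measure α} {τ : Measure β} {Q : α × β → ℝ≥0∞}

lemma map_fst_withDensity_prod_absolutelyContinuous [SFinite τ] :
    ((ρ.prod τ).withDensity Q).map Prod.fst ≪ ρ := by
  have h := (withDensity_absolutelyContinuous (ρ.prod τ) Q).map measurable_fst
  rw [Measure.map_fst_prod] at h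
  exact h.trans Measure.smul_absolutelyContinuous

lemma map_snd_withDensity_prod_absolutelyContinuous [SFinite ρ] [SFinite τ] :
    ((ρ.prod τ).withDensity Q).map Prod.snd ≪ τ := by
  have h := (withDensity_absolutelyContinuous (ρ.prod τ) Q).map measurable_snd
  rw [Measure.map_snd_prod] at h
  exact h.trans Measure.smul_absolutelyContinuous

lemma absolutelyContinuous_map_fst_withDensity_prod [SFinite τ] (hτ : τ ≠ 0)
    (hQ : Measurable Q) (hQ0 : ∀ p, Q p ≠ 0) :
    ρ ≪ ((ρ.prod τ).withDensity Q).map Prod.fst := by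
  refine Measure.AbsolutelyContinuous.mk fun s hs hμs => ?_
  rw [Measure.map_apply measurable_fst hs] at hμs
  have h := withDensity_absolutelyContinuous' hQ.aemeasurable (ae_of_all _ hQ0) hμs
  rw [← Set.prod_univ, Measure.prod_prod, mul_eq_zero] at h
  exact h.resolve_right (Measure.measure_univ_ne_zero.2 hτ)

lemma absolutelyContinuous_map_snd_withDensity_prod [SFinite τ] (hρ : ρ ≠ 0)
    (hQ : Measurable Q) (hQ0 : ∀ p, Q p ≠ 0) :
    τ ≪ ((ρ.prod τ).withDensity Q).map Prod.snd := by
  refine Measure.AbsolutelyContinuous.mk fun s hs hμs => ?_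
  rw [Measure.map_apply measurable_snd hs] at hμs
  have h := withDensity_absolutelyContinuous' hQ.aemeasurable (ae_of_all _ hQ0) hμs
  rw [← Set.univ_prod, Measure.prod_prod, mul_eq_zero] at h
  exact h.resolve_left (Measure.measure_univ_ne_zero.2 hρ)

end Marginals

lemma withDensity_prod_eq_withDensity_rnDeriv_mul {ρ ρ' : Measure α} {τ τ' : Measure β}
    [SigmaFinite ρ] [SigmaFinite ρ'] [SigmaFinite τ] [SigmaFinite τ'] (hρ : ρ' ≪ ρ) (hτ : τ' ≪ τ)
    {Q : α × β → ℝ≥0∞} (hQ : Measurable Q) :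
    (ρ'.prod τ').withDensity Q = ((ρ.prod τ).withDensity Q).withDensity
      (fun p => ρ'.rnDeriv ρ p.1 * τ'.rnDeriv τ p.2) := by
  have hH : Measurable fun p : α × β => ρ'.rnDeriv ρ p.1 * τ'.rnDeriv τ p.2 := by fun_prop
  rw [← withDensity_mul _ hQ hH, mul_comm, withDensity_mul _ hH hQ,
    ← prod_withDensity (Measure.measurable_rnDeriv _ _) (Measure.measurable_rnDeriv _ _),
    Measure.withDensity_rnDeriv_eq _ _ hρ, Measure.withDensity_rnDeriv_eq _ _ hτ]

lemma ENNReal.ofReal_exp_log_toReal {x : ℝ≥0∞} (h0 : x ≠ 0) (htop : x ≠ ∞) :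
    ENNReal.ofReal (exp (Real.log x.toReal)) = x := by
  rw [Real.exp_log (toReal_pos h0 htop), ENNReal.ofReal_toReal htop]

lemma ae_rnDeriv_ne_zero_ne_top {κ ρ ρ' : Measure α} [SigmaFinite ρ] [SigmaFinite ρ']
    (hρ : ρ' ≪ ρ) (hκρ : κ ≪ ρ) (hκρ' : κ ≪ ρ') :
    ∀ᵐ x ∂κ, ρ'.rnDeriv ρ x ≠ 0 ∧ ρ'.rnDeriv ρ x ≠ ∞ := by
  filter_upwards [hκρ'.ae_le (Measure.rnDeriv_pos hρ), hκρ.ae_le (Measure.rnDeriv_lt_top ρ' ρ)]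
    with x hpos hlt using ⟨hpos.ne', hlt.ne⟩

theorem withDensity_prod_eq_of_map_eq {ρ ρ' : Measure α} {τ τ' : Measure β}
    [SigmaFinite ρ] [SigmaFinite ρ'] [SigmaFinite τ] [SigmaFinite τ']
    {Q : α × β → ℝ≥0∞} (hQ : Measurable Q) (hQ0 : ∀ p, Q p ≠ 0)
    [IsFiniteMeasure ((ρ.prod τ).withDensity Q)]
    (hfst : ((ρ'.prod τ').withDensity Q).map Prod.fst = ((ρ.prod τ).withDensity Q).map Prod.fst)
    (hsnd : ((ρ'.prod τ').withDensity Q).map Prod.snd = ((ρ.prod τ).withDensity Q).map Prod.snd) :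
    (ρ'.prod τ').withDensity Q = (ρ.prod τ).withDensity Q := by
  set μ := (ρ.prod τ).withDensity Q
  rcases eq_or_ne ((ρ'.prod τ').withDensity Q) 0 with h | h
  · rw [h, eq_comm, ← Measure.map_eq_zero_iff measurable_fst.aemeasurable, ← hfst, h,
      Measure.map_zero]
  have hρ' : ρ' ≠ 0 := by rintro rfl; simp at h
  have hτ' : τ' ≠ 0 := by rintro rfl; simp at h
  have hρ : ρ' ≪ ρ := (absolutelyContinuous_map_fst_withDensity_prod hτ' hQ hQ0).trans
    (hfst ▸ map_fst_withDensity_prod_absolutelyContinuous)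
  have hτ : τ' ≪ τ := (absolutelyContinuous_map_snd_withDensity_prod hρ' hQ hQ0).trans
    (hsnd ▸ map_snd_withDensity_prod_absolutelyContinuous)
  set a := ρ'.rnDeriv ρ
  set b := τ'.rnDeriv τ
  have ha : ∀ᵐ p ∂μ, a p.1 ≠ 0 ∧ a p.1 ≠ ∞ :=
    ae_of_ae_map (p := fun x => a x ≠ 0 ∧ a x ≠ ∞) measurable_fst.aemeasurable <|
      ae_rnDeriv_ne_zero_ne_top hρ map_fst_withDensity_prod_absolutelyContinuous
        (hfst ▸ map_fst_withDensity_prod_absolutelyContinuous)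
  have hb : ∀ᵐ p ∂μ, b p.2 ≠ 0 ∧ b p.2 ≠ ∞ :=
    ae_of_ae_map (p := fun y => b y ≠ 0 ∧ b y ≠ ∞) measurable_snd.aemeasurable <|
      ae_rnDeriv_ne_zero_ne_top hτ map_snd_withDensity_prod_absolutelyContinuous
        (hsnd ▸ map_snd_withDensity_prod_absolutelyContinuous)
  have hdensity : (fun p => a p.1 * b p.2)
      =ᵐ[μ] fun p => ENNReal.ofReal (exp (Real.log (a p.1).toReal + Real.log (b p.2).toReal)) := by
    filter_upwards [ha, hb] with p hpa hpb
    rw [exp_add, ENNReal.ofReal_mul (exp_pos _).le, ENNReal.ofReal_exp_log_toReal hpa.1 hpa.2,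
      ENNReal.ofReal_exp_log_toReal hpb.1 hpb.2]
  have hμ' : (ρ'.prod τ').withDensity Q = μ.withDensity fun p =>
      ENNReal.ofReal (exp (Real.log (a p.1).toReal + Real.log (b p.2).toReal)) := by
    rw [withDensity_prod_eq_withDensity_rnDeriv_mul hρ hτ hQ, withDensity_congr_ae hdensity]
  rw [hμ'] at hfst hsnd ⊢
  exact withDensity_exp_add_eq_self_of_map_eq (u := fun x => Real.log (a x).toReal)
    (v := fun y => Real.log (b y).toReal) (Measure.measurable_rnDeriv _ _).ennreal_toReal.log
    (Measure.measurable_rnDeriv _ _).ennreal_toReal.log hfst hsnd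

theorem stmt_1_general (m : ℕ)
    (μ0 μT : Measure (Fin m → ℝ))
    [IsProbabilityMeasure μ0]
    (q : (Fin m → ℝ) × (Fin m → ℝ) → ℝ)
    (hqc : Continuous q) (hqpos : ∀ p, 0 < q p)
    (ν0 νT ν0' νT' : Measure (Fin m → ℝ))
    [SigmaFinite ν0] [SigmaFinite νT] [SigmaFinite ν0'] [SigmaFinite νT']
    (h0 : ((ν0.prod νT).withDensity (fun p => ENNReal.ofReal (q p))).map Prod.fst = μ0)
    (hT : ((ν0.prod νT).withDensity (fun p => ENNReal.ofReal (q p))).map Prod.snd = μT)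
    (h0' : ((ν0'.prod νT').withDensity (fun p => ENNReal.ofReal (q p))).map Prod.fst = μ0)
    (hT' : ((ν0'.prod νT').withDensity (fun p => ENNReal.ofReal (q p))).map Prod.snd = μT) :
    (ν0.prod νT).withDensity (fun p => ENNReal.ofReal (q p))
      = (ν0'.prod νT').withDensity (fun p => ENNReal.ofReal (q p)) := by
  have : IsFiniteMeasure ((ν0.prod νT).withDensity fun p => ENNReal.ofReal (q p)) :=
    (Measure.isFiniteMeasure_map_iff measurable_fst.aemeasurable).1 (h0 ▸ inferInstance)
  exact (withDensity_prod_eq_of_map_eq hqc.measurable.ennreal_ofReal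
    (fun p => (ENNReal.ofReal_pos.2 (hqpos p)).ne') (h0'.trans h0.symm) (hT'.trans hT.symm)).symm

/-- **Beurling–Jamison uniqueness** (Proposition 2, uniqueness part). -/
theorem stmt_1 (m : ℕ) (hm : 1 ≤ m)
    (μ0 μT : Measure (Fin m → ℝ))
    [IsProbabilityMeasure μ0] [IsProbabilityMeasure μT]
    (q : (Fin m → ℝ) × (Fin m → ℝ) → ℝ)
    (hqc : Continuous q) (hqb : ∃ C, ∀ p, q p ≤ C) (hqpos : ∀ p, 0 < q p)
    (ν0 νT ν0' νT' : Measure (Fin m → ℝ))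
    [SigmaFinite ν0] [SigmaFinite νT] [SigmaFinite ν0'] [SigmaFinite νT']
    (h0 : ((ν0.prod νT).withDensity (fun p => ENNReal.ofReal (q p))).map Prod.fst = μ0)
    (hT : ((ν0.prod νT).withDensity (fun p => ENNReal.ofReal (q p))).map Prod.snd = μT)
    (h0' : ((ν0'.prod νT').withDensity (fun p => ENNReal.ofReal (q p))).map Prod.fst = μ0)
    (hT' : ((ν0'.prod νT').withDensity (fun p => ENNReal.ofReal (q p))).map Prod.snd = μT) :
    (ν0.prod νT).withDensity (fun p => ENNReal.ofReal (q p))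
      = (ν0'.prod νT').withDensity (fun p => ENNReal.ofReal (q p)) :=
  stmt_1_general m μ0 μT q hqc hqpos ν0 νT ν0' νT' h0 hT h0' hT'
end

section
/- Let m ≥ 1 and let λ denote Lebesgue measure on ℝ^m. Let q : ℝ^m × ℝ^m → ℝ be continuous and strictly positive, let μ0 be a compactly supported Borel probability measure on ℝ^m, and let μT be a Borel probability measure on ℝ^m with μT ≪ λ. Let ν0, νT be σ-finite Borel measures on ℝ^m such that the measure on ℝ^m × ℝ^m with density q with respect to ν0 ⊗ νT has first marginal μ0 and second marginal μT. Assume the function h0(x) := ∫ q(x,y) dνT(y) is finite for every x and continuous on ℝ^m, and assume H(μT | S_q μ0) < +∞. Then H(μT | S_q ν0) < +∞ and ∫ (dμ0/dν0)(x) dμ0(x) < +∞. -/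
/-!
The first marginal identity says `μ0 = h0 • ν0` with `h0 > 0`, so `ν0` lives on the compact
support `K` of `μ0`, where the continuous positive `h0` is pinched between constants
`0 < c ≤ h0 ≤ C`. Hence `ν0` is finite, `∫ h0 dμ0 ≤ C`, and the densities of `S_q μ0` and
`S_q ν0` differ by a factor in `[c, C]`; the two log-likelihood ratios of `μT` then differ by a
bounded function, so finiteness of one relative entropy gives finiteness of the other.
-/

open MeasureTheory
open scoped Classical

/-- The relative entropy `H(μ | ν) = ∫ log(dμ/dν) dμ` when `μ ≪ ν` (and the integral
is defined), and `+∞` otherwise. -/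
noncomputable def relEntropy {Ω : Type*} [MeasurableSpace Ω] (μ ν : Measure Ω) : EReal :=
  if μ ≪ ν ∧ Integrable (fun x => Real.log ((μ.rnDeriv ν x).toReal)) μ then
    ((∫ x, Real.log ((μ.rnDeriv ν x).toReal) ∂μ : ℝ) : EReal)
  else ⊤

/-- `S_q θ` : the measure on `ℝ^m` with density `y ↦ ∫ q(x,y) dθ(x)` with respect to
Lebesgue measure. -/
noncomputable def Sq (m : ℕ) (q : (Fin m → ℝ) × (Fin m → ℝ) → ℝ)
    (θ : Measure (Fin m → ℝ)) : Measure (Fin m → ℝ) :=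
  MeasureTheory.volume.withDensity fun y => ∫⁻ x, ENNReal.ofReal (q (x, y)) ∂θ

open scoped ENNReal NNReal

theorem IsCompact.exists_nnreal_bounds {X : Type*} [TopologicalSpace X] {K : Set X}
    (hK : IsCompact K) {h : X → ℝ≥0∞} (hcont : ContinuousOn (fun x => (h x).toReal) K)
    (h0 : ∀ x ∈ K, h x ≠ 0) (htop : ∀ x ∈ K, h x ≠ ∞) :
    ∃ c C : ℝ≥0, 0 < c ∧ ∀ x ∈ K, c ≤ h x ∧ h x ≤ C := by
  obtain ⟨c, hc, hcK⟩ := hK.exists_forall_le' hcont fun x hx =>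
    ENNReal.toReal_pos (h0 x hx) (htop x hx)
  obtain ⟨C, hCK⟩ := hK.bddAbove_image hcont
  refine ⟨c.toNNReal, C.toNNReal, Real.toNNReal_pos.2 hc, fun x hx => ?_⟩
  rw [← ENNReal.ofReal_toReal (htop x hx)]
  exact ⟨ENNReal.ofReal_le_ofReal (hcK x hx), ENNReal.ofReal_le_ofReal (hCK ⟨x, hx, rfl⟩)⟩

namespace MeasureTheory

variable {α β : Type*} [MeasurableSpace α] [MeasurableSpace β]

theorem map_fst_withDensity_prod (μ : Measure α) (ν : Measure β) [SFinite μ] [SFinite ν]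
    {w : α × β → ℝ≥0∞} (hw : Measurable w) :
    ((μ.prod ν).withDensity w).map Prod.fst = μ.withDensity fun x => ∫⁻ y, w (x, y) ∂ν := by
  ext s hs
  rw [Measure.map_apply measurable_fst hs, withDensity_apply _ (measurable_fst hs),
    withDensity_apply _ hs, ← Set.prod_univ, ← Measure.restrict_prod_eq_prod_univ,
    lintegral_prod _ hw.aemeasurable]

theorem lintegral_ofReal_ne_zero {μ : Measure α} (hμ : μ ≠ 0) {f : α → ℝ} (hf : Measurable f)
    (hpos : ∀ x, 0 < f x) : ∫⁻ x, ENNReal.ofReal (f x) ∂μ ≠ 0 := by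
  rw [Ne, lintegral_eq_zero_iff hf.ennreal_ofReal]
  exact fun h => hμ (ae_eq_bot.1 (Filter.eventually_false_iff_eq_bot.1
    (h.mono fun x hx => (ENNReal.ofReal_pos.2 (hpos x)).ne' hx)))

theorem mul_lintegral_le_lintegral_withDensity {ν : Measure α} {h u : α → ℝ≥0∞}
    (hh : Measurable h) (hu : Measurable u) {c : ℝ≥0∞} (hc : ∀ᵐ x ∂ν, c ≤ h x) :
    c * ∫⁻ x, u x ∂ν ≤ ∫⁻ x, u x ∂ν.withDensity h := by
  rw [lintegral_withDensity_eq_lintegral_mul _ hh hu, ← lintegral_const_mul _ hu]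
  exact lintegral_mono_ae (hc.mono fun x hx => mul_le_mul_left hx _)

theorem lintegral_withDensity_le_mul_lintegral {ν : Measure α} {h u : α → ℝ≥0∞}
    (hh : Measurable h) (hu : Measurable u) {C : ℝ≥0∞} (hC : ∀ᵐ x ∂ν, h x ≤ C) :
    ∫⁻ x, u x ∂ν.withDensity h ≤ C * ∫⁻ x, u x ∂ν := by
  rw [lintegral_withDensity_eq_lintegral_mul _ hh hu, ← lintegral_const_mul _ hu]
  exact lintegral_mono_ae (hC.mono fun x hx => mul_le_mul_left hx _)

theorem isFiniteMeasure_of_withDensity {ν : Measure α} {h : α → ℝ≥0∞} (hh : Measurable h)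
    [IsFiniteMeasure (ν.withDensity h)] {c : ℝ≥0∞} (hc : c ≠ 0) (hch : ∀ᵐ x ∂ν, c ≤ h x) :
    IsFiniteMeasure ν := by
  have hbound := mul_lintegral_le_lintegral_withDensity (u := fun _ => 1) hh measurable_const hch
  simp only [lintegral_one] at hbound
  exact ⟨ENNReal.lt_top_of_mul_ne_top_right (hbound.trans_lt (measure_lt_top _ _)).ne hc⟩

theorem withDensity_eq_withDensity_div {κ : Measure α} {f g : α → ℝ≥0∞} (hf : Measurable f)
    (hg : Measurable g) (hf0 : ∀ x, f x ≠ 0) (hftop : ∀ x, f x ≠ ∞) :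
    κ.withDensity g = (κ.withDensity f).withDensity (g / f) := by
  rw [← withDensity_mul _ hf (hg.div hf)]
  congr 1
  funext x
  exact (ENNReal.mul_div_cancel (hf0 x) (hftop x)).symm

theorem lintegral_ofReal_lt_top_of_isCompact [TopologicalSpace α] {ν : Measure α}
    {K : Set α} (hK : IsCompact K) (hνK : ν K ≠ ∞) (hKae : ∀ᵐ x ∂ν, x ∈ K) {u : α → ℝ}
    (hu : Continuous u) : ∫⁻ x, ENNReal.ofReal (u x) ∂ν < ∞ := by
  rw [← Measure.restrict_eq_self_of_ae_mem hKae]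
  exact setLIntegral_lt_top_of_isCompact hνK hK (continuous_real_toNNReal.comp hu)

theorem lintegral_rnDeriv_withDensity_le {ν : Measure α} [SigmaFinite ν] {h : α → ℝ≥0∞}
    (hh : Measurable h) {C : ℝ≥0∞} (hC : ∀ᵐ x ∂ν, h x ≤ C) :
    ∫⁻ x, (ν.withDensity h).rnDeriv ν x ∂ν.withDensity h ≤ C * ν.withDensity h Set.univ := by
  rw [lintegral_congr_ae
    ((withDensity_absolutelyContinuous ν h).ae_le (Measure.rnDeriv_withDensity ν hh)),
    withDensity_apply _ .univ, Measure.restrict_univ]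
  exact lintegral_withDensity_le_mul_lintegral hh hh hC

theorem relEntropy_lt_top_iff {μ ν : Measure α} :
    relEntropy μ ν < ⊤ ↔ μ ≪ ν ∧ Integrable (llr μ ν) μ := by
  unfold relEntropy
  split_ifs with h
  · exact iff_of_true (EReal.coe_lt_top _) h
  · exact iff_of_false (lt_irrefl _) h

theorem integrable_log_toReal_of_bounds {μ : Measure α} [IsFiniteMeasure μ] {w : α → ℝ≥0∞}
    (hw : Measurable w) {c C : ℝ≥0} (hc : 0 < c) (hcw : ∀ x, c ≤ w x) (hwC : ∀ x, w x ≤ C) :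
    Integrable (fun x => Real.log (w x).toReal) μ := by
  refine .of_bound (Real.measurable_log.comp hw.ennreal_toReal).aestronglyMeasurable
    (max |Real.log c| |Real.log C|) (ae_of_all _ fun x => ?_)
  have hcw' : (c : ℝ) ≤ (w x).toReal := by
    simpa using ENNReal.toReal_mono (ne_top_of_le_ne_top ENNReal.coe_ne_top (hwC x)) (hcw x)
  have hwC' : (w x).toReal ≤ C := by simpa using ENNReal.toReal_mono ENNReal.coe_ne_top (hwC x)
  exact abs_le_max_abs_abs (Real.log_le_log hc hcw') (Real.log_le_log (hc.trans_le hcw') hwC')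

theorem relEntropy_lt_top_of_withDensity {μ ν : Measure α} [IsFiniteMeasure μ] [SigmaFinite ν]
    {w : α → ℝ≥0∞} (hw : Measurable w) {c C : ℝ≥0} (hc : 0 < c) (hcw : ∀ x, c ≤ w x)
    (hwC : ∀ x, w x ≤ C)
    (h : relEntropy μ (ν.withDensity w) < ⊤) : relEntropy μ ν < ⊤ := by
  obtain ⟨hμw, hint⟩ := relEntropy_lt_top_iff.1 h
  have hw0 : ∀ x, w x ≠ 0 := fun x => ((ENNReal.coe_pos.2 hc).trans_le (hcw x)).ne'
  have hwtop : ∀ x, w x ≠ ∞ := fun x => ne_top_of_le_ne_top ENNReal.coe_ne_top (hwC x)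
  have hμν : μ ≪ ν := hμw.trans (withDensity_absolutelyContinuous ν w)
  have hrn : μ.rnDeriv (ν.withDensity w) =ᵐ[μ] fun x => (w x)⁻¹ * μ.rnDeriv ν x :=
    hμν.ae_le (Measure.rnDeriv_withDensity_right μ ν hw.aemeasurable (ae_of_all _ hw0)
      (ae_of_all _ hwtop))
  have hllr : llr μ ν =ᵐ[μ] llr μ (ν.withDensity w) + fun x => Real.log (w x).toReal := by
    filter_upwards [hrn, Measure.rnDeriv_pos hμν, hμν.ae_le (Measure.rnDeriv_ne_top μ ν)]
      with x hx hpos htop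
    have hr : (μ.rnDeriv ν x).toReal ≠ 0 := (ENNReal.toReal_pos hpos.ne' htop).ne'
    have hwx : (w x).toReal ≠ 0 := (ENNReal.toReal_pos (hw0 x) (hwtop x)).ne'
    simp only [Pi.add_apply, llr_def, hx, ENNReal.toReal_mul, ENNReal.toReal_inv]
    rw [Real.log_mul (inv_ne_zero hwx) hr, Real.log_inv]
    ring
  exact relEntropy_lt_top_iff.2
    ⟨hμν, (hint.add (integrable_log_toReal_of_bounds hw hc hcw hwC)).congr hllr.symm⟩

section Sq

variable {m : ℕ} {q : (Fin m → ℝ) × (Fin m → ℝ) → ℝ}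

theorem Sq_withDensity_eq (hq : Measurable q) {θ : Measure (Fin m → ℝ)} [SFinite θ]
    {h : (Fin m → ℝ) → ℝ≥0∞} (hh : Measurable h) {c C : ℝ≥0}
    (hbd : ∀ᵐ x ∂θ, c ≤ h x ∧ h x ≤ C)
    (h0 : ∀ y, ∫⁻ x, ENNReal.ofReal (q (x, y)) ∂θ ≠ 0)
    (htop : ∀ y, ∫⁻ x, ENNReal.ofReal (q (x, y)) ∂θ ≠ ∞) :
    ∃ w : (Fin m → ℝ) → ℝ≥0∞, Measurable w ∧ (∀ y, c ≤ w y) ∧ (∀ y, w y ≤ C) ∧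
      Sq m q (θ.withDensity h) = (Sq m q θ).withDensity w := by
  have hQ : Measurable fun p => ENNReal.ofReal (q p) := ENNReal.measurable_ofReal.comp hq
  have hQy : ∀ y, Measurable fun x => ENNReal.ofReal (q (x, y)) := fun y =>
    hQ.comp measurable_prodMk_right
  set f := fun y => ∫⁻ x, ENNReal.ofReal (q (x, y)) ∂θ
  set g := fun y => ∫⁻ x, ENNReal.ofReal (q (x, y)) ∂θ.withDensity h
  have hf : Measurable f := hQ.lintegral_prod_left'
  have hg : Measurable g := hQ.lintegral_prod_left'
  refine ⟨g / f, hg.div hf, fun y => ?_, fun y => ?_,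
    withDensity_eq_withDensity_div hf hg h0 htop⟩
  · rw [Pi.div_apply, ENNReal.le_div_iff_mul_le (.inl (h0 y)) (.inl (htop y))]
    exact mul_lintegral_le_lintegral_withDensity hh (hQy y) (hbd.mono fun _ hx => hx.1)
  · exact ENNReal.div_le_of_le_mul
      (lintegral_withDensity_le_mul_lintegral hh (hQy y) (hbd.mono fun _ hx => hx.2))

end Sq

end MeasureTheory

theorem stmt_6_general (m : ℕ)
    (q : (Fin m → ℝ) × (Fin m → ℝ) → ℝ)
    (hqc : Continuous q) (hqpos : ∀ p, 0 < q p)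
    (μ0 μT : Measure (Fin m → ℝ))
    [IsProbabilityMeasure μ0] [IsProbabilityMeasure μT]
    (K : Set (Fin m → ℝ)) (hK : IsCompact K) (hμ0K : μ0 Kᶜ = 0)
    (ν0 νT : Measure (Fin m → ℝ)) [SigmaFinite ν0] [SigmaFinite νT]
    (hfst : ((ν0.prod νT).withDensity (fun p => ENNReal.ofReal (q p))).map Prod.fst = μ0)
    (hfin : ∀ x, ∫⁻ y, ENNReal.ofReal (q (x, y)) ∂νT < ⊤)
    (hcont : Continuous fun x => (∫⁻ y, ENNReal.ofReal (q (x, y)) ∂νT).toReal)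
    (hH : relEntropy μT (Sq m q μ0) < ⊤) :
    relEntropy μT (Sq m q ν0) < ⊤ ∧ ∫⁻ x, μ0.rnDeriv ν0 x ∂μ0 < ⊤ := by
  have hQ : Measurable fun p => ENNReal.ofReal (q p) := hqc.measurable.ennreal_ofReal
  set h0 := fun x => ∫⁻ y, ENNReal.ofReal (q (x, y)) ∂νT
  have hh0 : Measurable h0 := hQ.lintegral_prod_right'
  obtain rfl : μ0 = ν0.withDensity h0 := by rw [← hfst, map_fst_withDensity_prod _ _ hQ]
  have hμ0 := IsProbabilityMeasure.ne_zero (ν0.withDensity h0)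
  have hh0pos : ∀ x, h0 x ≠ 0 := fun x =>
    lintegral_ofReal_ne_zero (fun hνT => by simp [hνT, h0] at hμ0) (by fun_prop) fun y => hqpos _
  have hν0K : ∀ᵐ x ∂ν0, x ∈ K := mem_ae_iff.2
    (withDensity_absolutelyContinuous' hh0.aemeasurable (ae_of_all _ hh0pos) hμ0K)
  obtain ⟨c, C, hc, hbdK⟩ := hK.exists_nnreal_bounds hcont.continuousOn
    (fun x _ => hh0pos x) (fun x _ => (hfin x).ne)
  have hbd : ∀ᵐ x ∂ν0, c ≤ h0 x ∧ h0 x ≤ C := hν0K.mono hbdK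
  have : IsFiniteMeasure ν0 :=
    isFiniteMeasure_of_withDensity hh0 (ENNReal.coe_pos.2 hc).ne' (hbd.mono fun _ hx => hx.1)
  have hf0 : ∀ y, ∫⁻ x, ENNReal.ofReal (q (x, y)) ∂ν0 ≠ 0 := fun y =>
    lintegral_ofReal_ne_zero (fun hν0 => by simp [hν0] at hμ0) (by fun_prop) fun x => hqpos _
  have hftop : ∀ y, ∫⁻ x, ENNReal.ofReal (q (x, y)) ∂ν0 ≠ ∞ := fun y =>
    (lintegral_ofReal_lt_top_of_isCompact hK (measure_ne_top _ _) hν0K (by fun_prop)).ne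
  obtain ⟨w, hw, hcw, hwC, hSq⟩ := Sq_withDensity_eq hqc.measurable hh0 hbd hf0 hftop
  have : SigmaFinite (Sq m q ν0) := SigmaFinite.withDensity_of_ne_top' hftop
  exact ⟨relEntropy_lt_top_of_withDensity hw hc hcw hwC (hSq ▸ hH),
    (lintegral_rnDeriv_withDensity_le hh0 (hbd.mono fun _ hx => hx.2)).trans_lt
      (ENNReal.mul_lt_top ENNReal.coe_lt_top (measure_lt_top _ _))⟩

/-- **Lemma 1** of the paper. -/
theorem stmt_6 (m : ℕ) (hm : 1 ≤ m)
    (q : (Fin m → ℝ) × (Fin m → ℝ) → ℝ)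
    (hqc : Continuous q) (hqpos : ∀ p, 0 < q p)
    (μ0 μT : Measure (Fin m → ℝ))
    [IsProbabilityMeasure μ0] [IsProbabilityMeasure μT]
    (K : Set (Fin m → ℝ)) (hK : IsCompact K) (hμ0K : μ0 Kᶜ = 0)
    (hμTac : μT ≪ MeasureTheory.volume)
    (ν0 νT : Measure (Fin m → ℝ)) [SigmaFinite ν0] [SigmaFinite νT]
    (hfst : ((ν0.prod νT).withDensity (fun p => ENNReal.ofReal (q p))).map Prod.fst = μ0)
    (hsnd : ((ν0.prod νT).withDensity (fun p => ENNReal.ofReal (q p))).map Prod.snd = μT)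
    (hfin : ∀ x, ∫⁻ y, ENNReal.ofReal (q (x, y)) ∂νT < ⊤)
    (hcont : Continuous fun x => (∫⁻ y, ENNReal.ofReal (q (x, y)) ∂νT).toReal)
    (hH : relEntropy μT (Sq m q μ0) < ⊤) :
    relEntropy μT (Sq m q ν0) < ⊤ ∧ ∫⁻ x, μ0.rnDeriv ν0 x ∂μ0 < ⊤ :=
  stmt_6_general m q hqc hqpos μ0 μT K hK hμ0K ν0 νT hfst hfin hcont hH
end

section
/- Let m ≥ 1 and let λ denote Lebesgue measure on ℝ^m. Let q : ℝ^m × ℝ^m → (0,∞) be Borel measurable, let ν0 be a σ-finite Borel measure on ℝ^m, and let f : ℝ^m → [0,∞) be measurable such that μ0 := f · ν0 is a probability measure. Let ρT : ℝ^m → [0,∞) be measurable such that μT, the measure with density y ↦ ρT(y) · ∫ q(x,y) dν0(x) with respect to λ, is a probability measure. Assume 0 < ∫ q(x,y) dν0(x) < ∞ for λ-almost every y, and ∫ q(x,y) ρT(y) dλ(y) = f(x) for ν0-almost every x. Then ∫ log⁻( ( ∫ f(x) q(x,y) dν0(x) ) / ( ∫ q(x,y) dν0(x) ) ) dμT(y)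 ≤ ∫ log⁻( f(x) ) dμ0(x). -/
/-!
For each `y`, write `w = q(·, y)`, `c = ∫ w dν0` and `A = ∫ f w dν0`. Since `log⁻` is convex,
Jensen's inequality for the probability measure `w · ν0 / c` gives
`c · log⁻ (A / c) ≤ ∫ log⁻ (f x) q(x, y) dν0(x)`; here Jensen is obtained by integrating the
tangent line of `-log` at `A / c`. Integrating against `ρT dλ` and exchanging the order of
integration, the Schrödinger relation `∫ q(x, y) ρT(y) dλ(y) = f(x)` turns the right-hand side
into `∫ f log⁻ f dν0 = ∫ log⁻ f dμ0`.
-/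

open MeasureTheory
open scoped ENNReal

/-- `log⁻` extended by `⊤` on `(-∞, 0]`, so that its tangent-line bounds hold at every real
argument, while `0 * ⊤ = 0` leaves `∫ f log⁻ f` unchanged. -/
noncomputable def logNeg (u : ℝ) : ℝ≥0∞ :=
  if 0 < u then ENNReal.ofReal (max (-Real.log u) 0) else ⊤

@[fun_prop]
lemma measurable_logNeg : Measurable logNeg :=
  Measurable.ite measurableSet_Ioi
    ((Real.measurable_log.neg.max measurable_const).ennreal_ofReal) measurable_const

lemma ofReal_mul_logNeg (u : ℝ) :
    ENNReal.ofReal u * logNeg u = ENNReal.ofReal u * ENNReal.ofReal (max (-Real.log u) 0) := by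
  rcases le_or_gt u 0 with hu | hu
  · simp [ENNReal.ofReal_of_nonpos hu]
  · simp [logNeg, hu]

lemma ofReal_one_sub_log_le_logNeg_add {t : ℝ} (ht : 0 < t) (u : ℝ) :
    ENNReal.ofReal (1 - Real.log t) ≤ logNeg u + ENNReal.ofReal t⁻¹ * ENNReal.ofReal u := by
  rcases le_or_gt u 0 with hu | hu
  · simp [logNeg, not_lt.mpr hu]
  have tangent : Real.log (u / t) ≤ u / t - 1 := Real.log_le_sub_one_of_pos (by positivity)
  rw [Real.log_div hu.ne' ht.ne', div_eq_inv_mul] at tangent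
  rw [logNeg, if_pos hu, ← ENNReal.ofReal_mul (by positivity),
    ← ENNReal.ofReal_add (le_max_right _ _) (by positivity)]
  refine ENNReal.ofReal_le_ofReal ?_
  linarith [le_max_left (-Real.log u) 0]

section Jensen

variable {α : Type*} [MeasurableSpace α] (ν : Measure α) {f : α → ℝ} {w : α → ℝ≥0∞}

lemma ofReal_one_sub_log_mul_lintegral_le (hf : Measurable f) (hw : Measurable w)
    {t : ℝ} (ht : 0 < t) :
    ENNReal.ofReal (1 - Real.log t) * ∫⁻ x, w x ∂ν
      ≤ (∫⁻ x, logNeg (f x) * w x ∂ν)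
        + ENNReal.ofReal t⁻¹ * ∫⁻ x, ENNReal.ofReal (f x) * w x ∂ν :=
  calc ENNReal.ofReal (1 - Real.log t) * ∫⁻ x, w x ∂ν
      = ∫⁻ x, ENNReal.ofReal (1 - Real.log t) * w x ∂ν := (lintegral_const_mul _ hw).symm
    _ ≤ ∫⁻ x, (logNeg (f x) + ENNReal.ofReal t⁻¹ * ENNReal.ofReal (f x)) * w x ∂ν :=
        lintegral_mono fun x => mul_le_mul_left (ofReal_one_sub_log_le_logNeg_add ht _) _
    _ = (∫⁻ x, logNeg (f x) * w x ∂ν)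
          + ENNReal.ofReal t⁻¹ * ∫⁻ x, ENNReal.ofReal (f x) * w x ∂ν := by
        simp_rw [add_mul, mul_assoc]
        rw [lintegral_add_left (f := fun x => logNeg (f x) * w x)
            ((measurable_logNeg.comp hf).mul hw),
          lintegral_const_mul _ (f := fun x => ENNReal.ofReal (f x) * w x)
            (hf.ennreal_ofReal.mul hw)]

/-- Jensen's inequality for `log⁻` and the probability measure `w · ν / ∫ w`. No finiteness or
positivity of `∫ w` is needed: in the degenerate cases the junk values of `toReal`, `/` and
`Real.log` make the left side vanish. -/
lemma lintegral_mul_logNeg_ratio_le (hf : Measurable f) (hw : Measurable w) :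
    (∫⁻ x, w x ∂ν) * ENNReal.ofReal (max (-Real.log
        ((∫⁻ x, ENNReal.ofReal (f x) * w x ∂ν).toReal / (∫⁻ x, w x ∂ν).toReal)) 0)
      ≤ ∫⁻ x, logNeg (f x) * w x ∂ν := by
  set c := ∫⁻ x, w x ∂ν
  set A := ∫⁻ x, ENNReal.ofReal (f x) * w x ∂ν
  set t := A.toReal / c.toReal
  rcases eq_or_lt_of_le (show 0 ≤ t by positivity) with ht0 | ht0
  · simp [← ht0]
  rcases le_or_gt 1 t with ht1 | ht1
  · simp [Real.log_nonneg ht1]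
  have hc : c ≠ ⊤ := fun h => by simp [t, h] at ht0
  have hA : A ≠ ⊤ := fun h => by simp [t, h] at ht0
  have hcA : ENNReal.ofReal t⁻¹ * A = c := by
    have hApos : 0 < A.toReal := ((div_pos_iff.mp ht0).resolve_right (by simp)).1
    rw [← ENNReal.ofReal_toReal hA, ← ENNReal.ofReal_mul (by positivity), inv_div,
      div_mul_cancel₀ _ hApos.ne', ENNReal.ofReal_toReal hc]
  have hlog : 0 ≤ -Real.log t := neg_nonneg.mpr (Real.log_nonpos ht0.le ht1.le)
  have key := ofReal_one_sub_log_mul_lintegral_le ν hf hw ht0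
  rw [hcA, sub_eq_neg_add, ENNReal.ofReal_add hlog zero_le_one, ENNReal.ofReal_one, add_mul,
    one_mul] at key
  rw [max_eq_left hlog, mul_comm]
  exact (ENNReal.add_le_add_iff_right hc).mp key

end Jensen

section Kernel

variable {α β : Type*} [MeasurableSpace α] [MeasurableSpace β] {ν : Measure α} {μ : Measure β}
  {q : α × β → ℝ} {ρ : β → ℝ}

lemma lintegral_withDensity_logNeg_ratio_le [SFinite ν] (hqm : Measurable q)
    (hq0 : ∀ p, 0 ≤ q p) {f : α → ℝ} (hf : Measurable f) (hρ : Measurable ρ) :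
    ∫⁻ y, ENNReal.ofReal (max (-Real.log
          ((∫⁻ x, ENNReal.ofReal (f x * q (x, y)) ∂ν).toReal
            / (∫⁻ x, ENNReal.ofReal (q (x, y)) ∂ν).toReal)) 0)
        ∂(μ.withDensity fun y => ENNReal.ofReal (ρ y) * ∫⁻ x, ENNReal.ofReal (q (x, y)) ∂ν)
      ≤ ∫⁻ y, ENNReal.ofReal (ρ y) * ∫⁻ x, logNeg (f x) * ENNReal.ofReal (q (x, y)) ∂ν ∂μ := by
  have hc : Measurable fun y => ∫⁻ x, ENNReal.ofReal (q (x, y)) ∂ν :=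
    hqm.ennreal_ofReal.lintegral_prod_left'
  refine (lintegral_withDensity_le_lintegral_mul _ (hρ.ennreal_ofReal.mul hc) _).trans ?_
  refine lintegral_mono fun y => ?_
  simp_rw [Pi.mul_apply, mul_assoc, ENNReal.ofReal_mul' (hq0 _)]
  exact mul_le_mul_right (lintegral_mul_logNeg_ratio_le ν hf (by fun_prop)) _

lemma lintegral_ofReal_mul_lintegral_swap [SFinite ν] [SFinite μ] (hqm : Measurable q)
    (hq0 : ∀ p, 0 ≤ q p) (hρ : Measurable ρ) {g : α → ℝ≥0∞} (hg : Measurable g) :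
    ∫⁻ y, ENNReal.ofReal (ρ y) * ∫⁻ x, g x * ENNReal.ofReal (q (x, y)) ∂ν ∂μ
      = ∫⁻ x, g x * ∫⁻ y, ENNReal.ofReal (q (x, y) * ρ y) ∂μ ∂ν :=
  calc ∫⁻ y, ENNReal.ofReal (ρ y) * ∫⁻ x, g x * ENNReal.ofReal (q (x, y)) ∂ν ∂μ
      = ∫⁻ y, ∫⁻ x, g x * ENNReal.ofReal (q (x, y) * ρ y) ∂ν ∂μ := by
        refine lintegral_congr fun y => ?_
        rw [← lintegral_const_mul _ (by fun_prop)]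
        refine lintegral_congr fun x => ?_
        rw [ENNReal.ofReal_mul (hq0 _)]
        ring
    _ = ∫⁻ x, ∫⁻ y, g x * ENNReal.ofReal (q (x, y) * ρ y) ∂μ ∂ν :=
        lintegral_lintegral_swap (by fun_prop)
    _ = ∫⁻ x, g x * ∫⁻ y, ENNReal.ofReal (q (x, y) * ρ y) ∂μ ∂ν :=
        lintegral_congr fun x => lintegral_const_mul _ (by fun_prop)

end Kernel

theorem stmt_9_general (m : ℕ)
    (q : (Fin m → ℝ) × (Fin m → ℝ) → ℝ)
    (hqm : Measurable q) (hqpos : ∀ p, 0 < q p)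
    (ν0 : Measure (Fin m → ℝ)) [SigmaFinite ν0]
    (f : (Fin m → ℝ) → ℝ) (hf : Measurable f)
    (ρT : (Fin m → ℝ) → ℝ) (hρ : Measurable ρT)
    (hsys : ∀ᵐ x ∂ν0,
      ∫⁻ y, ENNReal.ofReal (q (x, y) * ρT y) = ENNReal.ofReal (f x)) :
    ∫⁻ y, ENNReal.ofReal (max (-Real.log
          ((∫⁻ x, ENNReal.ofReal (f x * q (x, y)) ∂ν0).toReal
            / (∫⁻ x, ENNReal.ofReal (q (x, y)) ∂ν0).toReal)) 0)
        ∂(MeasureTheory.volume.withDensity fun y =>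
          ENNReal.ofReal (ρT y) * ∫⁻ x, ENNReal.ofReal (q (x, y)) ∂ν0)
      ≤ ∫⁻ x, ENNReal.ofReal (max (-Real.log (f x)) 0)
          ∂(ν0.withDensity fun x => ENNReal.ofReal (f x)) := by
  have hq0 : ∀ p, 0 ≤ q p := fun p => (hqpos p).le
  calc _ ≤ ∫⁻ y, ENNReal.ofReal (ρT y) * ∫⁻ x, logNeg (f x) * ENNReal.ofReal (q (x, y)) ∂ν0 :=
        lintegral_withDensity_logNeg_ratio_le hqm hq0 hf hρ
    _ = ∫⁻ x, logNeg (f x) * ∫⁻ y, ENNReal.ofReal (q (x, y) * ρT y) ∂volume ∂ν0 :=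
        lintegral_ofReal_mul_lintegral_swap hqm hq0 hρ (measurable_logNeg.comp hf)
    _ = ∫⁻ x, ENNReal.ofReal (f x) * ENNReal.ofReal (max (-Real.log (f x)) 0) ∂ν0 :=
        lintegral_congr_ae <| hsys.mono fun x hx => by
          dsimp only
          rw [hx, mul_comm, ofReal_mul_logNeg]
    _ = _ := (lintegral_withDensity_eq_lintegral_mul _ hf.ennreal_ofReal (by fun_prop)).symm

/-- **Key estimate in the proof of Lemma 1**: the `μT`-integral of `log⁻` of the
density ratio `d(S_T μ0)/d(S_T ν0)` is bounded by `∫ log⁻(dμ0/dν0) dμ0`.  Here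
`log⁻ x = max (−log x) 0`, `μ0 = f · ν0` and `μT` has density
`y ↦ ρT(y) ∫ q(x,y) dν0(x)` with respect to Lebesgue measure `λ` on `ℝ^m`. -/
theorem stmt_9 (m : ℕ) (hm : 1 ≤ m)
    (q : (Fin m → ℝ) × (Fin m → ℝ) → ℝ)
    (hqm : Measurable q) (hqpos : ∀ p, 0 < q p)
    (ν0 : Measure (Fin m → ℝ)) [SigmaFinite ν0]
    (f : (Fin m → ℝ) → ℝ) (hf : Measurable f) (hf0 : ∀ x, 0 ≤ f x)
    (hμ0 : IsProbabilityMeasure (ν0.withDensity fun x => ENNReal.ofReal (f x)))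
    (ρT : (Fin m → ℝ) → ℝ) (hρ : Measurable ρT) (hρ0 : ∀ y, 0 ≤ ρT y)
    (hμT : IsProbabilityMeasure (MeasureTheory.volume.withDensity fun y =>
      ENNReal.ofReal (ρT y) * ∫⁻ x, ENNReal.ofReal (q (x, y)) ∂ν0))
    (hfin : ∀ᵐ y ∂(MeasureTheory.volume : Measure (Fin m → ℝ)),
      0 < ∫⁻ x, ENNReal.ofReal (q (x, y)) ∂ν0 ∧
        ∫⁻ x, ENNReal.ofReal (q (x, y)) ∂ν0 < ⊤)
    (hsys : ∀ᵐ x ∂ν0,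
      ∫⁻ y, ENNReal.ofReal (q (x, y) * ρT y) = ENNReal.ofReal (f x)) :
    ∫⁻ y, ENNReal.ofReal (max (-Real.log
          ((∫⁻ x, ENNReal.ofReal (f x * q (x, y)) ∂ν0).toReal
            / (∫⁻ x, ENNReal.ofReal (q (x, y)) ∂ν0).toReal)) 0)
        ∂(MeasureTheory.volume.withDensity fun y =>
          ENNReal.ofReal (ρT y) * ∫⁻ x, ENNReal.ofReal (q (x, y)) ∂ν0)
      ≤ ∫⁻ x, ENNReal.ofReal (max (-Real.log (f x)) 0)
          ∂(ν0.withDensity fun x => ENNReal.ofReal (f x)) :=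
  stmt_9_general m q hqm hqpos ν0 f hf ρT hρ hsys
end
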